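/- arXiv:2305.01473 — 2 statements merged into one kernel-verified Lean document; each statement's English description precedes it below -/
import Mathlib

section
/- For the interval polytope T = {p : l ≤ p ≤ u, ∑ p_i = 1} (nonempty) and any x ∈ ℝ^n, there exists a minimizer p* of pᵀ x over T and a threshold t ∈ ℝ such that p*_i = u_i whenever x_i < t and p*_i = l_i whenever x_i > t. -/
/-!
The polytope `T` is compact and (by the intermediate value theorem on the segment `[l, u]`)
nonempty, so `p ↦ p ⬝ᵥ x` has a minimizer `p` on it. If `p i < u i`, `l j < p j` and
`x i < x j`, shifting a little mass from `j` to `i` stays in `T` and lowers the objective; hence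
every `x j` with `l j < p j` is at most every `x i` with `p i < u i`, and any `t` separating
these two finite sets of values is the threshold.
-/

open Matrix

section IntervalSimplex

variable {ι : Type*} [Fintype ι]

def intervalSimplex (l u : ι → ℝ) : Set (ι → ℝ) :=
  {p | (∀ i, l i ≤ p i ∧ p i ≤ u i) ∧ ∑ i, p i = 1}

theorem intervalSimplex_eq_Icc_inter (l u : ι → ℝ) :
    intervalSimplex l u = Set.Icc l u ∩ {p | ∑ i, p i = 1} := by
  ext p
  simp only [intervalSimplex, Set.mem_ofPred_eq, Set.mem_inter_iff, Set.mem_Icc, Pi.le_def,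
    forall_and]

theorem isCompact_intervalSimplex (l u : ι → ℝ) : IsCompact (intervalSimplex l u) := by
  rw [intervalSimplex_eq_Icc_inter]
  exact isCompact_Icc.inter_right <|
    isClosed_eq (continuous_finsetSum _ fun i _ => continuous_apply i) continuous_const

theorem intervalSimplex_nonempty {l u : ι → ℝ} (hlu : l ≤ u)
    (hsl : ∑ i, l i ≤ 1) (hsu : 1 ≤ ∑ i, u i) : (intervalSimplex l u).Nonempty := by
  set f : ℝ → ℝ := fun θ => ∑ i, (l i + θ * (u i - l i))
  have hf : ContinuousOn f (Set.Icc 0 1) := by fun_prop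
  obtain ⟨θ, ⟨hθ0, hθ1⟩, hθ⟩ :=
    intermediate_value_Icc zero_le_one hf ⟨by simpa [f] using hsl, by simpa [f] using hsu⟩
  refine ⟨fun i => l i + θ * (u i - l i), fun i => ⟨?_, ?_⟩, hθ⟩
  · nlinarith [hlu i]
  · nlinarith [hlu i]

variable [DecidableEq ι] {l u x p : ι → ℝ}

theorem le_of_isMinOn_intervalSimplex (hmin : IsMinOn (· ⬝ᵥ x) (intervalSimplex l u) p)
    (hp : p ∈ intervalSimplex l u) {i j : ι} (hi : p i < u i) (hj : l j < p j) :
    x j ≤ x i := by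
  by_contra! hlt
  have hij : i ≠ j := by rintro rfl; exact lt_irrefl _ hlt
  set ε := min (u i - p i) (p j - l j)
  have hε : 0 < ε := lt_min (sub_pos.2 hi) (sub_pos.2 hj)
  set q := p + ε • (Pi.single i 1 - Pi.single j 1)
  have hq : q ∈ intervalSimplex l u := by
    refine ⟨fun k => ?_, ?_⟩
    · have hεi : ε ≤ u i - p i := min_le_left _ _
      have hεj : ε ≤ p j - l j := min_le_right _ _
      obtain ⟨hlk, hku⟩ := hp.1 k
      rcases eq_or_ne k i with rfl | hki
      · have hqk : q k = p k + ε := by simp [q, hij]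
        constructor <;> linarith
      rcases eq_or_ne k j with rfl | hkj
      · have hqk : q k = p k - ε := by simp [q, hki, sub_eq_add_neg]
        constructor <;> linarith
      · simpa [q, hki, hkj] using hp.1 k
    · simp [q, Finset.sum_add_distrib, ← Finset.mul_sum, Finset.sum_sub_distrib, hp.2]
  have hqx : q ⬝ᵥ x = p ⬝ᵥ x - ε * (x j - x i) := by
    simp only [q, add_dotProduct, smul_dotProduct, sub_dotProduct, single_dotProduct, one_mul,
      smul_eq_mul]
    ring
  have hle : p ⬝ᵥ x ≤ q ⬝ᵥ x := hmin hq
  linarith [mul_pos hε (sub_pos.2 hlt)]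

end IntervalSimplex

theorem exists_threshold {ι α : Type*} [Finite ι] [LinearOrder α] [Nonempty α] (x : ι → α)
    (P Q : ι → Prop) (h : ∀ i j, P i → Q j → x j ≤ x i) :
    ∃ t, ∀ i, (P i → t ≤ x i) ∧ (Q i → x i ≤ t) := by
  by_cases hQ : ∃ j, Q j
  · obtain ⟨j, hj, hmax⟩ := Set.exists_max_image {j | Q j} x (Set.toFinite _) hQ
    exact ⟨x j, fun i => ⟨fun hi => h i j hi hj, hmax i⟩⟩
  · obtain ⟨t, ht⟩ := (Set.finite_range x).bddBelow
    push Not at hQ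
    exact ⟨t, fun i => ⟨fun _ => ht ⟨i, rfl⟩, fun hi => absurd hi (hQ i)⟩⟩

/-- For the nonempty interval polytope `T = {p : l ≤ p ≤ u, ∑ p = 1}` and any `x`,
there is a minimizer `p*` of `pᵀ x` over `T` and a threshold `t` with
`p*_i = u_i` whenever `x_i < t` and `p*_i = l_i` whenever `x_i > t`. -/
theorem stmt_13 (n : ℕ) (l u : Fin n → ℝ) (x : Fin n → ℝ)
    (hlu : ∀ i, l i ≤ u i)
    (hsl : ∑ i, l i ≤ 1) (hsu : 1 ≤ ∑ i, u i)
    (T : Set (Fin n → ℝ))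
    (hT : T = {p : Fin n → ℝ | (∀ i, l i ≤ p i ∧ p i ≤ u i) ∧ ∑ i, p i = 1}) :
    ∃ p ∈ T, (∀ q ∈ T, p ⬝ᵥ x ≤ q ⬝ᵥ x) ∧
      ∃ t : ℝ, ∀ i, (x i < t → p i = u i) ∧ (t < x i → p i = l i) := by
  change T = intervalSimplex l u at hT
  subst hT
  obtain ⟨p, hp, hmin⟩ := (isCompact_intervalSimplex l u).exists_isMinOn
    (intervalSimplex_nonempty hlu hsl hsu) (by fun_prop : Continuous (· ⬝ᵥ x)).continuousOn
  obtain ⟨t, ht⟩ := exists_threshold x (fun i => p i < u i) (fun j => l j < p j)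
    fun i j hi hj => le_of_isMinOn_intervalSimplex hmin hp hi hj
  refine ⟨p, hp, fun q hq => hmin hq, t, fun i => ⟨fun hxt => ?_, fun hxt => ?_⟩⟩
  · exact (hp.1 i).2.eq_of_not_lt fun hlt => (ht i).1 hlt |>.not_gt hxt
  · exact ((hp.1 i).1.eq_of_not_lt fun hlt => (ht i).2 hlt |>.not_gt hxt).symm
end

section
/- Let f : ℝ^ℓ → ℝ be differentiable at a point u, given as f(w) = sᵀ x(w) where x(w) solves (I − P(w)) x = r with P differentiable and I − P(u) invertible. Then the gradient of f at u is given componentwise by (∇f(u))_i = sᵀ (I − P(u))^{-1} (∂P/∂w_i)(u) x(u). -/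
/-!
Along the coordinate line `t ↦ update u i t` write `A t = 1 - P (update u i t)`. Invertible
matrices form an open set, so `x (update u i t) = (A t)⁻¹ r` for `t` near `u i`, and the
derivative of inversion, `A' ↦ -A⁻¹ A' A⁻¹`, gives the derivative of `x` along the line.
Since `f` is differentiable at `u`, its derivative along the line is `fderiv ℝ f u eᵢ`.
-/

open Matrix Topology

section

variable {𝕜 R : Type*} [NontriviallyNormedField 𝕜] [NormedRing R] [NormedAlgebra 𝕜 R]
  [HasSummableGeomSeries R]

theorem HasDerivAt.ringInverse {g : 𝕜 → R} {g' : R} {t : 𝕜} (hg : HasDerivAt g g' t)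
    (ht : IsUnit (g t)) :
    HasDerivAt (fun t => Ring.inverse (g t))
      (-(Ring.inverse (g t) * g' * Ring.inverse (g t))) t := by
  obtain ⟨v, hv⟩ := ht
  have hinv : HasFDerivAt Ring.inverse (-ContinuousLinearMap.mulLeftRight 𝕜 R ↑v⁻¹ ↑v⁻¹) (g t) :=
    hv ▸ hasFDerivAt_ringInverse v
  simpa [← hv, Function.comp_def] using hinv.comp_hasDerivAt t hg

end

namespace Matrix

variable {𝕜 : Type*} [NontriviallyNormedField 𝕜] [CompleteSpace 𝕜] {m n : Type*} [Fintype m]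
  [Fintype n]

-- Any norm would do: the `ℓ∞` operator norm is chosen because it makes matrices a normed algebra.
attribute [local instance] Matrix.linftyOpNormedAddCommGroup Matrix.linftyOpNormedSpace
  Matrix.linftyOpNormedRing Matrix.linftyOpNormedAlgebra

theorem hasDerivAt_of_hasDerivAt_entries {A : 𝕜 → Matrix m n 𝕜} {A' : Matrix m n 𝕜} {t : 𝕜}
    (hA : ∀ a b, HasDerivAt (fun t => A t a b) (A' a b) t) : HasDerivAt A A' t :=
  (ofLinearEquiv 𝕜 : (m → n → 𝕜) ≃ₗ[𝕜] Matrix m n 𝕜).toContinuousLinearEquiv.hasFDerivAt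
    |>.comp_hasDerivAt t (hasDerivAt_pi.2 fun a => hasDerivAt_pi.2 (hA a))

theorem hasDerivAt_of_mulVec_eventuallyEq [DecidableEq m] {A : 𝕜 → Matrix m m 𝕜}
    {A' : Matrix m m 𝕜} {y : 𝕜 → m → 𝕜} {r : m → 𝕜} {t : 𝕜}
    (hA : ∀ a b, HasDerivAt (fun s => A s a b) (A' a b) t) (ht : IsUnit (A t))
    (hy : ∀ᶠ s in 𝓝 t, A s *ᵥ y s = r) :
    HasDerivAt y (-((A t)⁻¹ *ᵥ (A' *ᵥ y t))) t := by
  let _ : HasSummableGeomSeries (Matrix m m 𝕜) :=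
    @instHasSummableGeomSeriesOfCompleteSpace _ _ (FiniteDimensional.complete 𝕜 _)
  have hAd : HasDerivAt A A' t := hasDerivAt_of_hasDerivAt_entries hA
  have hunit : ∀ᶠ s in 𝓝 t, IsUnit (A s) :=
    hAd.continuousAt.preimage_mem_nhds (Units.isOpen.mem_nhds ht)
  have hy_inv : y =ᶠ[𝓝 t] fun s => Ring.inverse (A s) *ᵥ r := by
    filter_upwards [hy, hunit] with s hs hs_unit
    rw [← hs, mulVec_mulVec, Ring.inverse_mul_cancel _ hs_unit, one_mulVec]
  have hinv : HasDerivAt (fun s => Ring.inverse (A s) *ᵥ r)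
      (-(Ring.inverse (A t) * A' * Ring.inverse (A t)) *ᵥ r) t := by
    exact (LinearMap.toContinuousLinearMap ((mulVecBilin 𝕜 𝕜).flip r)).hasFDerivAt
      |>.comp_hasDerivAt t (hAd.ringInverse ht)
  refine (hinv.congr_of_eventuallyEq hy_inv).congr_deriv ?_
  rw [hy_inv.eq_of_nhds, nonsing_inv_eq_ringInverse, neg_mulVec, mulVec_mulVec, mulVec_mulVec]

end Matrix

theorem HasDerivAt.const_dotProduct {𝕜 m : Type*} [NontriviallyNormedField 𝕜] [Fintype m]
    (s : m → 𝕜) {y : 𝕜 → m → 𝕜} {y' : m → 𝕜} {t : 𝕜} (hy : HasDerivAt y y' t) :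
    HasDerivAt (fun t => s ⬝ᵥ y t) (s ⬝ᵥ y') t := by
  simpa [dotProduct] using HasDerivAt.fun_sum fun j _ => (hasDerivAt_pi.1 hy j).const_mul (s j)

/-- If `f(w) = sᵀ x(w)` with `(I - P(w)) x(w) = r`, `P` differentiable in each
coordinate, `I - P(u)` invertible, and `f` differentiable at `u`, then the
components of the gradient of `f` at `u` are
`sᵀ (I - P(u))⁻¹ (∂P/∂w_i)(u) x(u)`. -/
theorem stmt_16 (n ℓ : ℕ) (P : (Fin ℓ → ℝ) → Matrix (Fin n) (Fin n) ℝ)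
    (r s : Fin n → ℝ) (x : (Fin ℓ → ℝ) → Fin n → ℝ) (u : Fin ℓ → ℝ)
    (f : (Fin ℓ → ℝ) → ℝ) (hf : f = fun w => s ⬝ᵥ x w)
    (hx : ∀ w, (1 - P w).mulVec (x w) = r)
    (hP : ∀ (i : Fin ℓ) (a b : Fin n),
      DifferentiableAt ℝ (fun t => P (Function.update u i t) a b) (u i))
    (hinv : IsUnit (1 - P u))
    (hdiff : DifferentiableAt ℝ f u) :
    ∀ i : Fin ℓ, fderiv ℝ f u (Pi.single i 1) =
      s ⬝ᵥ ((1 - P u)⁻¹).mulVec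
        ((Matrix.of fun a b =>
            deriv (fun t => P (Function.update u i t) a b) (u i)).mulVec (x u)) := by
  intro i
  set P' : Matrix (Fin n) (Fin n) ℝ :=
    Matrix.of fun a b => deriv (fun t => P (Function.update u i t) a b) (u i)
  have hA : ∀ a b,
      HasDerivAt (fun t => (1 - P (Function.update u i t)) a b) ((-P') a b) (u i) :=
    fun a b => by
      simpa [P'] using (hP i a b).hasDerivAt.const_sub ((1 : Matrix (Fin n) (Fin n) ℝ) a b)
  have hx_line : HasDerivAt (fun t => x (Function.update u i t))
      (-((1 - P u)⁻¹ *ᵥ (-P' *ᵥ x u))) (u i) := by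
    simpa using Matrix.hasDerivAt_of_mulVec_eventuallyEq hA (by simpa using hinv)
      (Filter.Eventually.of_forall fun t => hx _)
  have hf_line : HasDerivAt (fun t => f (Function.update u i t))
      (fderiv ℝ f u (Pi.single i 1)) (u i) := by
    have hfu : HasFDerivAt f (fderiv ℝ f u) (Function.update u i (u i)) := by
      simpa using hdiff.hasFDerivAt
    exact hfu.comp_hasDerivAt (u i) (hasDerivAt_update u i (u i))
  subst hf
  rw [hf_line.unique (hx_line.const_dotProduct s)]
  simp [neg_mulVec, mulVec_neg]
end
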